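/- arXiv:2211.02515 — 2 statements merged into one kernel-verified Lean document; each statement's English description precedes it below -/
import Mathlib

section
/- There is a positive absolute constant C such that the number of characters ψ ∈ Ψ for which the inequality |X₁(D^{80},ψ)| + |X₂(D^{80},ψ)| + ∫₁^{D^{80}} (|X₁(x,ψ)| + |X₂(x,ψ)|)·x^{-1} dx < 𝓛^{1171} FAILS is at most C·𝒫·𝓛^{-740}. -/
open scoped Classical

noncomputable section

/-- The Dirichlet L-function of `χ` (extended to modulus `0` by `0`, a case never used below). -/
def Lfun {N : ℕ} (χ : DirichletCharacter ℂ N) (s : ℂ) : ℂ :=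
  if h : N = 0 then 0
  else
    haveI : NeZero N := ⟨h⟩
    DirichletCharacter.LFunction χ s

/-- A Dirichlet character is *real* if all of its values are real numbers. -/
def IsRealChar {N : ℕ} (χ : DirichletCharacter ℂ N) : Prop :=
  ∀ a : ZMod N, (χ a).im = 0

/-- `𝓛 = log D`. -/
def bigL (D : ℕ) : ℝ := Real.log D

/-- `P = exp (𝓛 ^ 9)`. -/
def bigP (D : ℕ) : ℝ := Real.exp (bigL D ^ 9)

/-- Assumption (A): `L(1, χ) < 𝓛 ^ (-2022)`. -/
def AssumptionA (D : ℕ) (χ : DirichletCharacter ℂ D) : Prop :=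
  (Lfun χ 1).re < bigL D ^ (-2022 : ℤ)

/-- `p ~ P`, i.e. `p` is a prime with `P < p < P * (1 + 𝓛 ^ (-68))`. -/
def SimP (D p : ℕ) : Prop :=
  p.Prime ∧ bigP D < (p : ℝ) ∧ (p : ℝ) < bigP D * (1 + bigL D ^ (-68 : ℤ))

/-- The finite set of primes `p ~ P`. -/
def primesP (D : ℕ) : Finset ℕ :=
  (Finset.range ⌈2 * bigP D⌉₊).filter (SimP D)

/-- `𝒫 = ∑_{p ~ P} p`. -/
def calP (D : ℕ) : ℝ := ∑ p ∈ primesP D, (p : ℝ)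

/-- `ν(n) = ∑_{d ∣ n} χ(d)`. -/
def nuF (D : ℕ) (χ : DirichletCharacter ℂ D) (n : ℕ) : ℂ :=
  ∑ d ∈ n.divisors, χ (d : ZMod D)

/-- `υ(n) = ∑_{ab = n} μ(a) μ(b) χ(b)`. -/
def upsF (D : ℕ) (χ : DirichletCharacter ℂ D) (n : ℕ) : ℂ :=
  ∑ d ∈ n.divisors,
    ((ArithmeticFunction.moebius (n / d) : ℤ) : ℂ) * ((ArithmeticFunction.moebius d : ℤ) : ℂ) *
      χ (d : ZMod D)

/-- `t₀ = 𝓛 ^ 519`. -/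
def t0 (D : ℕ) : ℝ := bigL D ^ 519

/-- `s₀ = 1/2 + 2 π i t₀`. -/
def s0 (D : ℕ) : ℂ := 1 / 2 + 2 * (Real.pi : ℂ) * Complex.I * (t0 D : ℂ)

/-- `𝓛₁ = 𝓛 ^ 405`. -/
def bigL1 (D : ℕ) : ℝ := bigL D ^ 405

/-- `ν` truncated to `n ≤ D ^ 4`, as an arithmetic function. -/
def nuT (D : ℕ) (χ : DirichletCharacter ℂ D) : ArithmeticFunction ℂ :=
  ⟨fun n => if n = 0 then 0 else if n ≤ D ^ 4 then nuF D χ n else 0, by simp⟩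

/-- `υ` truncated to `n ≤ D ^ 4`, as an arithmetic function. -/
def upsT (D : ℕ) (χ : DirichletCharacter ℂ D) : ArithmeticFunction ℂ :=
  ⟨fun n => if n = 0 then 0 else if n ≤ D ^ 4 then upsF D χ n else 0, by simp⟩

/-- `ν₂₀`, the 20-fold Dirichlet convolution of the truncation of `ν`. -/
def nu20 (D : ℕ) (χ : DirichletCharacter ℂ D) (n : ℕ) : ℂ := (nuT D χ ^ 20) n

/-- `υ₂₀`, the 20-fold Dirichlet convolution of the truncation of `υ`. -/
def ups20 (D : ℕ) (χ : DirichletCharacter ℂ D) (n : ℕ) : ℂ := (upsT D χ ^ 20) n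

/-- `ς(n) = ∑_{lm = n, l ≤ D⁴, m ≤ D⁴} ν(l) υ(m)`. -/
def sigF (D : ℕ) (χ : DirichletCharacter ℂ D) (n : ℕ) : ℂ :=
  ∑ d ∈ n.divisors,
    if d ≤ D ^ 4 ∧ n / d ≤ D ^ 4 then nuF D χ d * upsF D χ (n / d) else 0

/-- `X₁(x, ψ) = ∑_{n ≤ x} ν₂₀(n) ψ(n) n^{-s₀}`. -/
def X1 (D : ℕ) (χ : DirichletCharacter ℂ D) {p : ℕ} (ψ : DirichletCharacter ℂ p) (x : ℝ) : ℂ :=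
  ∑ n ∈ Finset.Icc 1 ⌊x⌋₊, nu20 D χ n * ψ (n : ZMod p) * (n : ℂ) ^ (-s0 D)

/-- `X₂(x, ψ) = ∑_{n ≤ x} υ₂₀(n) ψ(n) n^{-s₀}`. -/
def X2 (D : ℕ) (χ : DirichletCharacter ℂ D) {p : ℕ} (ψ : DirichletCharacter ℂ p) (x : ℝ) : ℂ :=
  ∑ n ∈ Finset.Icc 1 ⌊x⌋₊, ups20 D χ n * ψ (n : ZMod p) * (n : ℂ) ^ (-s0 D)

/-- `X₃(x, ψ) = ∑_{D⁴ < n ≤ x} ν(n) ψ(n) n^{-s₀}`. -/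
def X3 (D : ℕ) (χ : DirichletCharacter ℂ D) {p : ℕ} (ψ : DirichletCharacter ℂ p) (x : ℝ) : ℂ :=
  ∑ n ∈ Finset.Ioc (D ^ 4) ⌊x⌋₊, nuF D χ n * ψ (n : ZMod p) * (n : ℂ) ^ (-s0 D)

/-- `X₄(x, ψ) = ∑_{D⁴ < n ≤ x} ς(n) ψ(n) n^{-s₀}`. -/
def X4 (D : ℕ) (χ : DirichletCharacter ℂ D) {p : ℕ} (ψ : DirichletCharacter ℂ p) (x : ℝ) : ℂ :=
  ∑ n ∈ Finset.Ioc (D ^ 4) ⌊x⌋₊, sigF D χ n * ψ (n : ZMod p) * (n : ℂ) ^ (-s0 D)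

/-- Inequality (3.4). -/
def Ineq1 (D : ℕ) (χ : DirichletCharacter ℂ D) {p : ℕ} (ψ : DirichletCharacter ℂ p) : Prop :=
  ‖X1 D χ ψ ((D : ℝ) ^ 80)‖ + ‖X2 D χ ψ ((D : ℝ) ^ 80)‖ +
      (∫ x in (1 : ℝ)..((D : ℝ) ^ 80), (‖X1 D χ ψ x‖ + ‖X2 D χ ψ x‖) / x) <
    bigL D ^ 1171

/-- Inequality (3.5). -/
def Ineq2 (D : ℕ) (χ : DirichletCharacter ℂ D) {p : ℕ} (ψ : DirichletCharacter ℂ p) : Prop :=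
  ‖X3 D χ ψ (bigP D ^ 2)‖ + (∫ x in ((D : ℝ) ^ 4)..(bigP D ^ 2), ‖X3 D χ ψ x‖ / x) <
    bigL D ^ (-585 : ℤ)

/-- Inequality (3.6). -/
def Ineq3 (D : ℕ) (χ : DirichletCharacter ℂ D) {p : ℕ} (ψ : DirichletCharacter ℂ p) : Prop :=
  ‖X4 D χ ψ ((D : ℝ) ^ 8)‖ + (∫ x in ((D : ℝ) ^ 4)..((D : ℝ) ^ 8), ‖X4 D χ ψ x‖ / x) <
    bigL D ^ (-633 : ℤ)

/-- Membership in `Ψ₁`: `ψ` is a primitive character mod `p` with `p ~ P` satisfying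
(3.4), (3.5) and (3.6). -/
def MemPsi1 (D : ℕ) (χ : DirichletCharacter ℂ D) {p : ℕ} (ψ : DirichletCharacter ℂ p) : Prop :=
  SimP D p ∧ ψ.IsPrimitive ∧ Ineq1 D χ ψ ∧ Ineq2 D χ ψ ∧ Ineq3 D χ ψ

/-- `F(s, ψ) = ∑_{n ≤ D⁴} ν(n) ψ(n) n^{-s}`. -/
def Ffun (D : ℕ) (χ : DirichletCharacter ℂ D) {p : ℕ} (ψ : DirichletCharacter ℂ p) (s : ℂ) : ℂ :=
  ∑ n ∈ Finset.Icc 1 (D ^ 4), nuF D χ n * ψ (n : ZMod p) * (n : ℂ) ^ (-s)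

/-- `G(s, ψ) = ∑_{n ≤ D⁴} υ(n) ψ(n) n^{-s}`. -/
def Gfun (D : ℕ) (χ : DirichletCharacter ℂ D) {p : ℕ} (ψ : DirichletCharacter ℂ p) (s : ℂ) : ℂ :=
  ∑ n ∈ Finset.Icc 1 (D ^ 4), upsF D χ n * ψ (n : ZMod p) * (n : ℂ) ^ (-s)

/-- `F'(s, ψ) = -∑_{n ≤ D⁴} ν(n) ψ(n) (log n) n^{-s}`, the derivative of `F` in `s`. -/
def Ffun' (D : ℕ) (χ : DirichletCharacter ℂ D) {p : ℕ} (ψ : DirichletCharacter ℂ p) (s : ℂ) : ℂ :=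
  -∑ n ∈ Finset.Icc 1 (D ^ 4),
    nuF D χ n * ψ (n : ZMod p) * ((Real.log n : ℝ) : ℂ) * (n : ℂ) ^ (-s)

/-- `F(1 - s, ψ̄) = ∑_{n ≤ D⁴} ν(n) conj(ψ(n)) n^{s - 1}`, as a function of `s`. -/
def FfunBar (D : ℕ) (χ : DirichletCharacter ℂ D) {p : ℕ} (ψ : DirichletCharacter ℂ p)
    (s : ℂ) : ℂ :=
  ∑ n ∈ Finset.Icc 1 (D ^ 4),
    nuF D χ n * (starRingEnd ℂ) (ψ (n : ZMod p)) * (n : ℂ) ^ (s - 1)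

/-- The region `Ω`. -/
def InOmega (D : ℕ) (s : ℂ) : Prop :=
  |(s - s0 D).re| < 1 / 2 ∧ |(s - s0 D).im| < bigL1 D + 2

/-- The region `Ω₁`. -/
def InOmega1 (D : ℕ) (s : ℂ) : Prop :=
  1 / 2 - Real.log (bigL D) / (100 * bigL D) < s.re ∧
    s.re < 1 + Real.log (bigL D) / (100 * bigL D) ∧
    |s.im - 2 * Real.pi * t0 D| < bigL1 D + 5

/-- The region `Ω₂`. -/
def InOmega2 (D : ℕ) (s : ℂ) : Prop :=
  1 / 2 - (bigL D)⁻¹ < s.re ∧ s.re < 1 + (bigL D)⁻¹ ∧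
    |s.im - 2 * Real.pi * t0 D| < bigL1 D + 4

/-- `α = π / log P`. -/
def alphaD (D : ℕ) : ℝ := Real.pi / Real.log (bigP D)

/-- The region `Ω₃`. -/
def InOmega3 (D : ℕ) (s : ℂ) : Prop :=
  1 / 2 - alphaD D < s.re ∧ s.re < 1 + alphaD D ∧
    |s.im - 2 * Real.pi * t0 D| < bigL1 D + 3

/-- The Gauss sum `τ(θ) = ∑_{a mod k} θ(a) e(a/k)`. -/
def tauSum {k : ℕ} (θ : DirichletCharacter ℂ k) : ℂ :=
  ∑ a ∈ Finset.range k,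
    θ (a : ZMod k) * Complex.exp (2 * (Real.pi : ℂ) * Complex.I * (a : ℂ) / (k : ℂ))

/-- The factor `Z(s, θ)` from the functional equation. -/
def Zfun {k : ℕ} (θ : DirichletCharacter ℂ k) (s : ℂ) : ℂ :=
  if θ (-1) = 1 then
    tauSum θ * (Real.pi : ℂ) ^ (s - 1 / 2) * (k : ℂ) ^ (-s) *
      Complex.Gamma ((1 - s) / 2) / Complex.Gamma (s / 2)
  else
    -Complex.I * tauSum θ * (Real.pi : ℂ) ^ (s - 1 / 2) * (k : ℂ) ^ (-s) *
      Complex.Gamma ((2 - s) / 2) / Complex.Gamma ((1 + s) / 2)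

/-- The product character `χψ` modulo `D * p`, i.e. `n ↦ χ(n) ψ(n)`. -/
def chiPsi (D : ℕ) (χ : DirichletCharacter ℂ D) {p : ℕ} (ψ : DirichletCharacter ℂ p) :
    DirichletCharacter ℂ (D * p) :=
  DirichletCharacter.changeLevel (dvd_mul_right D p) χ *
    DirichletCharacter.changeLevel (dvd_mul_left p D) ψ

/-- `Z̃(s, ψ) = Z(s, ψ) Z(s, χψ)`. -/
def Ztilde (D : ℕ) (χ : DirichletCharacter ℂ D) {p : ℕ} (ψ : DirichletCharacter ℂ p)
    (s : ℂ) : ℂ :=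
  Zfun ψ s * Zfun (chiPsi D χ ψ) s

/-- `T = exp (𝓛 ^ 1.1)`. -/
def bigT (D : ℕ) : ℝ := Real.exp (bigL D ^ (1.1 : ℝ))

/-- `P₄ = P T⁻² t₀`. -/
def P4 (D : ℕ) : ℝ := bigP D * bigT D ^ (-2 : ℤ) * t0 D

/-- The smooth weight `g(x) = π^{-1/2} ∫_{-∞}^{𝓛^{15} log x} e^{-u²} du`. -/
def gfun (D : ℕ) (x : ℝ) : ℝ :=
  Real.pi ^ (-(1 : ℝ) / 2) * ∫ u in Set.Iio (bigL D ^ 15 * Real.log x), Real.exp (-u ^ 2)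

/-- `g*(y) = g(y)` for `y > 1/2`, and `0` otherwise. -/
def gstar (D : ℕ) (y : ℝ) : ℝ := if 1 / 2 < y then gfun D y else 0

/-- `K(s, ψ) = ∑_n ψ(n) n^{-s} g*(P₄ / n)`. -/
def Kfun (D : ℕ) {p : ℕ} (ψ : DirichletCharacter ℂ p) (s : ℂ) : ℂ :=
  ∑' n : ℕ, ψ (n : ZMod p) * (n : ℂ) ^ (-s) * ((gstar D (P4 D / n) : ℝ) : ℂ)

/-- `N(1 - s, ψ̄) = ∑_n conj(ψ(n)) n^{s-1} g*(T² / n)`, as a function of `s`. -/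
def Nfun (D : ℕ) {p : ℕ} (ψ : DirichletCharacter ℂ p) (s : ℂ) : ℂ :=
  ∑' n : ℕ,
    (starRingEnd ℂ) (ψ (n : ZMod p)) * (n : ℂ) ^ (s - 1) * ((gstar D (bigT D ^ 2 / n) : ℝ) : ℂ)

/-- `𝔞 = (6/π²) L'(1,χ)² ∏_{q ∣ D} q/(q+1)`. -/
def fraka (D : ℕ) (χ : DirichletCharacter ℂ D) : ℂ :=
  6 / (Real.pi : ℂ) ^ 2 * deriv (Lfun χ) 1 ^ 2 * ∏ q ∈ D.primeFactors, (q : ℂ) / ((q : ℂ) + 1)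

/-!
For a modulus `p > D⁸⁰` the integers `n ≤ x ≤ D⁸⁰` have distinct residues mod `p`, so
orthogonality of characters gives `∑_ψ |X_i(x, ψ)|² ≤ p ∑_{n ≤ x} |c(n)|² / n` for the
coefficients `c = ν₂₀, υ₂₀`. These are bounded by the 40-fold divisor function `τ₄₀`, and
`τ₄₀² ≤ τ₁₆₀₀` together with `∑_{n ≤ x} τ_k(n) / n ≤ (1 + log x)^k` bounds the mean square of
`|X₁| + |X₂|` by `4 p (81 𝓛)^1600`. By Cauchy–Schwarz the sum of `|X₁| + |X₂|` over the
exceptional set `B` is then at most `√|B| · 2 √p (81 𝓛)^800` at every `x ∈ [1, D⁸⁰]`; integrating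
against `dx / x` and comparing with `|B| 𝓛^1171` gives `|B| ≤ 4 · 81^1602 p 𝓛^{-740}`, which is
summed over `p ~ P`.
-/

open ArithmeticFunction Finset
open scoped ArithmeticFunction.zeta

namespace ArithmeticFunction

theorem zeta_pow_apply_mul_le (k m n : ℕ) : (ζ ^ k) (m * n) ≤ (ζ ^ k) m * (ζ ^ k) n := by
  induction k generalizing m n with
  | zero =>
    simp only [pow_zero, one_apply]
    split_ifs <;> simp_all [mul_eq_one]
  | succ k ih =>
    simp only [pow_succ', zeta_mul_apply, Nat.divisors_mul, mul_def, sum_mul_sum]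
    refine (sum_image_le_of_nonneg fun _ _ ↦ Nat.zero_le _).trans ?_
    rw [sum_product]
    exact sum_le_sum fun a _ ↦ sum_le_sum fun b _ ↦ ih a b

theorem zeta_pow_apply_mul_zeta_pow_apply_le (k l n : ℕ) :
    (ζ ^ k) n * (ζ ^ l) n ≤ (ζ ^ (k * l)) n := by
  induction k generalizing n with
  | zero =>
    simp only [pow_zero, one_apply, zero_mul]
    split_ifs with h
    · simp [h, (isMultiplicative_zeta.pow (k := l)).map_one]
    · simp
  | succ k ih =>
    calc (ζ ^ (k + 1)) n * (ζ ^ l) n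
        = ∑ x ∈ n.divisorsAntidiagonal, (ζ ^ k) x.1 * (ζ ^ l) (x.1 * x.2) := by
          rw [pow_succ', zeta_mul_apply, sum_mul,
            ← Nat.sum_divisorsAntidiagonal (fun a _ ↦ (ζ ^ k) a * (ζ ^ l) n)]
          exact sum_congr rfl fun x hx ↦ by rw [(Nat.mem_divisorsAntidiagonal.1 hx).1]
      _ ≤ ∑ x ∈ n.divisorsAntidiagonal, (ζ ^ (k * l)) x.1 * (ζ ^ l) x.2 := by
          refine sum_le_sum fun x _ ↦ ?_
          calc (ζ ^ k) x.1 * (ζ ^ l) (x.1 * x.2)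
              ≤ (ζ ^ k) x.1 * (ζ ^ l) x.1 * (ζ ^ l) x.2 := by
                rw [mul_assoc]; exact Nat.mul_le_mul_left _ (zeta_pow_apply_mul_le l _ _)
            _ ≤ (ζ ^ (k * l)) x.1 * (ζ ^ l) x.2 := Nat.mul_le_mul_right _ (ih x.1)
      _ = (ζ ^ ((k + 1) * l)) n := by rw [← mul_apply, ← pow_add, add_one_mul]

theorem natCoe_pow {R : Type*} [Semiring R] (f : ArithmeticFunction ℕ) (k : ℕ) :
    ((f ^ k : ArithmeticFunction ℕ) : ArithmeticFunction R) = (f : ArithmeticFunction R) ^ k := by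
  induction k with
  | zero => exact natCoe_one
  | succ k ih => rw [pow_succ, natCoe_mul, ih, pow_succ]

theorem pdiv_id_mul (f g : ArithmeticFunction ℝ) :
    (f * g).pdiv ↑ArithmeticFunction.id =
      f.pdiv ↑ArithmeticFunction.id * g.pdiv ↑ArithmeticFunction.id := by
  ext n
  simp only [pdiv_apply, mul_apply, natCoe_apply, id_apply, sum_div]
  refine sum_congr rfl fun x hx ↦ ?_
  rw [← (Nat.mem_divisorsAntidiagonal.1 hx).1, Nat.cast_mul, mul_div_mul_comm]

theorem pdiv_id_pow (f : ArithmeticFunction ℝ) (k : ℕ) :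
    (f ^ k).pdiv ↑ArithmeticFunction.id = f.pdiv ↑ArithmeticFunction.id ^ k := by
  induction k with
  | zero =>
    ext n
    simp only [pow_zero, pdiv_apply, one_apply, natCoe_apply, id_apply]
    split_ifs with h <;> simp [h]
  | succ k ih => rw [pow_succ, pdiv_id_mul, ih, pow_succ]

theorem mul_apply_nonneg {f g : ArithmeticFunction ℝ} (hf : ∀ n, 0 ≤ f n) (hg : ∀ n, 0 ≤ g n)
    (n : ℕ) : 0 ≤ (f * g) n :=
  mul_apply (f := f) ▸ sum_nonneg fun x _ ↦ mul_nonneg (hf x.1) (hg x.2)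

theorem pow_apply_nonneg {f : ArithmeticFunction ℝ} (hf : ∀ n, 0 ≤ f n) (k n : ℕ) :
    0 ≤ (f ^ k) n := by
  induction k generalizing n with
  | zero => simp only [pow_zero, one_apply]; positivity
  | succ k ih => rw [pow_succ]; exact mul_apply_nonneg ih hf n

theorem sum_Ioc_mul_le {f g : ArithmeticFunction ℝ} (hf : ∀ n, 0 ≤ f n) (hg : ∀ n, 0 ≤ g n)
    (N : ℕ) : ∑ n ∈ Ioc 0 N, (f * g) n ≤ (∑ n ∈ Ioc 0 N, f n) * ∑ n ∈ Ioc 0 N, g n := by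
  rw [sum_Ioc_mul_eq_sum_prod_filter, sum_mul_sum, ← sum_product']
  exact sum_le_sum_of_subset_of_nonneg (filter_subset _ _) fun x _ _ ↦
    mul_nonneg (hf x.1) (hg x.2)

theorem sum_Ioc_pow_le {f : ArithmeticFunction ℝ} (hf : ∀ n, 0 ≤ f n) (k N : ℕ) :
    ∑ n ∈ Ioc 0 N, (f ^ k) n ≤ (∑ n ∈ Ioc 0 N, f n) ^ k := by
  induction k with
  | zero =>
    simp only [pow_zero, one_apply, sum_ite_eq', mem_Ioc]
    split_ifs <;> norm_num
  | succ k ih =>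
    rw [pow_succ, pow_succ]
    exact (sum_Ioc_mul_le (pow_apply_nonneg hf k) hf N).trans
      (mul_le_mul_of_nonneg_right ih (sum_nonneg fun n _ ↦ hf n))

theorem sum_Icc_zeta_pow_div_le (k N : ℕ) :
    ∑ n ∈ Icc 1 N, ((ζ ^ k) n : ℝ) / n ≤ (1 + Real.log N) ^ k := by
  set w : ArithmeticFunction ℝ := (ζ : ArithmeticFunction ℝ).pdiv ↑ArithmeticFunction.id
  have hw : ∀ n, 0 ≤ w n := fun n ↦ by simp only [w, pdiv_apply, natCoe_apply]; positivity
  have harmonic_eq : ∑ n ∈ Ioc 0 N, w n = harmonic N := by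
    rw [harmonic_eq_sum_Icc]
    push_cast
    refine sum_congr rfl fun n hn ↦ ?_
    simp [w, (mem_Ioc.1 hn).1.ne']
  calc ∑ n ∈ Icc 1 N, ((ζ ^ k) n : ℝ) / n
      = ∑ n ∈ Ioc 0 N, (w ^ k) n := by
        rw [← pdiv_id_pow, ← natCoe_pow]
        rfl
    _ ≤ (∑ n ∈ Ioc 0 N, w n) ^ k := sum_Ioc_pow_le hw k N
    _ ≤ (1 + Real.log N) ^ k :=
        pow_le_pow_left₀ (sum_nonneg fun n _ ↦ hw n) (harmonic_eq ▸ harmonic_le_one_add_log N) k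

theorem norm_mul_apply_le {R : Type*} [NormedRing R] {f g : ArithmeticFunction R}
    {F G : ArithmeticFunction ℕ} (hf : ∀ n, ‖f n‖ ≤ F n) (hg : ∀ n, ‖g n‖ ≤ G n) (n : ℕ) :
    ‖(f * g) n‖ ≤ (F * G) n := by
  rw [mul_apply, mul_apply, Nat.cast_sum]
  refine norm_sum_le_of_le _ fun x _ ↦ ?_
  rw [Nat.cast_mul]
  exact (norm_mul_le _ _).trans (mul_le_mul (hf _) (hg _) (norm_nonneg _) (Nat.cast_nonneg _))

theorem norm_pow_apply_le {R : Type*} [NormedRing R] [NormOneClass R] {f : ArithmeticFunction R}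
    {F : ArithmeticFunction ℕ} (hf : ∀ n, ‖f n‖ ≤ F n) (k n : ℕ) : ‖(f ^ k) n‖ ≤ (F ^ k) n := by
  induction k generalizing n with
  | zero => simp only [pow_zero, one_apply]; split_ifs <;> simp
  | succ k ih => rw [pow_succ, pow_succ]; exact norm_mul_apply_le ih hf n

theorem zeta_sq_apply (n : ℕ) : (ζ ^ 2) n = #n.divisors := by
  have h : ζ * ζ = sigma 0 := pow_zero_eq_zeta ▸ zeta_mul_pow_eq_sigma
  rw [sq, h, sigma_zero_apply]

theorem sum_Icc_norm_sq_div_le {a : ℕ → ℂ} {k : ℕ} (ha : ∀ n, ‖a n‖ ≤ (ζ ^ k) n) (N : ℕ) :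
    ∑ n ∈ Icc 1 N, ‖a n‖ ^ 2 / n ≤ (1 + Real.log N) ^ (k * k) := by
  refine le_trans (sum_le_sum fun n _ ↦ ?_) (sum_Icc_zeta_pow_div_le (k * k) N)
  gcongr
  calc ‖a n‖ ^ 2 ≤ ((ζ ^ k) n : ℝ) ^ 2 := by gcongr; exact ha n
    _ ≤ ((ζ ^ (k * k)) n : ℝ) := by
        rw [sq]; exact_mod_cast zeta_pow_apply_mul_zeta_pow_apply_le k k n

end ArithmeticFunction

theorem norm_nuF_le (D : ℕ) (χ : DirichletCharacter ℂ D) (n : ℕ) :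
    ‖nuF D χ n‖ ≤ #n.divisors :=
  calc ‖nuF D χ n‖ ≤ ∑ _d ∈ n.divisors, (1 : ℝ) := norm_sum_le_of_le _ fun d _ ↦ χ.norm_le_one d
    _ = #n.divisors := by simp

theorem norm_upsF_le (D : ℕ) (χ : DirichletCharacter ℂ D) (n : ℕ) :
    ‖upsF D χ n‖ ≤ #n.divisors := by
  have hμ (m : ℕ) : ‖((moebius m : ℤ) : ℂ)‖ ≤ 1 := by
    rw [Complex.norm_intCast]; exact_mod_cast abs_moebius_le_one
  calc ‖upsF D χ n‖ ≤ ∑ _d ∈ n.divisors, (1 : ℝ) := by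
        refine norm_sum_le_of_le _ fun d _ ↦ ?_
        rw [norm_mul, norm_mul]
        exact mul_le_one₀ (mul_le_one₀ (hμ _) (norm_nonneg _) (hμ _)) (norm_nonneg _)
          (χ.norm_le_one _)
    _ = #n.divisors := by simp

theorem norm_nuT_le (D : ℕ) (χ : DirichletCharacter ℂ D) (n : ℕ) :
    ‖nuT D χ n‖ ≤ (ζ ^ 2) n := by
  rw [zeta_sq_apply]
  change ‖if n = 0 then 0 else if n ≤ D ^ 4 then nuF D χ n else 0‖ ≤ _
  split_ifs
  · simp
  · exact norm_nuF_le D χ n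
  · simp

theorem norm_upsT_le (D : ℕ) (χ : DirichletCharacter ℂ D) (n : ℕ) :
    ‖upsT D χ n‖ ≤ (ζ ^ 2) n := by
  rw [zeta_sq_apply]
  change ‖if n = 0 then 0 else if n ≤ D ^ 4 then upsF D χ n else 0‖ ≤ _
  split_ifs
  · simp
  · exact norm_upsF_le D χ n
  · simp

theorem norm_nu20_le (D : ℕ) (χ : DirichletCharacter ℂ D) (n : ℕ) :
    ‖nu20 D χ n‖ ≤ (ζ ^ 40) n := by
  have h := norm_pow_apply_le (norm_nuT_le D χ) 20 n
  rw [← pow_mul] at h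
  exact h

theorem norm_ups20_le (D : ℕ) (χ : DirichletCharacter ℂ D) (n : ℕ) :
    ‖ups20 D χ n‖ ≤ (ζ ^ 40) n := by
  have h := norm_pow_apply_le (norm_upsT_le D χ) 20 n
  rw [← pow_mul] at h
  exact h

namespace DirichletCharacter

variable {q : ℕ} [NeZero q]

theorem sum_apply_mul_conj_apply (a b : ZMod q) :
    ∑ ψ : DirichletCharacter ℂ q, ψ a * starRingEnd ℂ (ψ b) =
      if IsUnit b ∧ a = b then (q.totient : ℂ) else 0 := by
  by_cases hb : IsUnit b
  · have hconj (ψ : DirichletCharacter ℂ q) : starRingEnd ℂ (ψ b) = ψ b⁻¹ := by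
      obtain ⟨u, rfl⟩ := hb
      rw [starRingEnd_apply, MulChar.star_apply', MulChar.inv_apply, Ring.inverse_unit,
        ZMod.inv_coe_unit]
    calc ∑ ψ : DirichletCharacter ℂ q, ψ a * starRingEnd ℂ (ψ b)
        = ∑ ψ : DirichletCharacter ℂ q, ψ b⁻¹ * ψ a :=
          sum_congr rfl fun ψ _ ↦ by rw [hconj, mul_comm]
      _ = _ := by rw [sum_char_inv_mul_char_eq ℂ hb a]; simp [hb, eq_comm]
  · simp [hb, MulChar.map_nonunit _ hb]

theorem sum_norm_sum_mul_apply_sq_le {s : Finset ℕ} (hs : ∀ n ∈ s, n < q) (c : ℕ → ℂ) :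
    ∑ ψ : DirichletCharacter ℂ q, ‖∑ n ∈ s, c n * ψ n‖ ^ 2 ≤ q.totient * ∑ n ∈ s, ‖c n‖ ^ 2 := by
  have hinj : ∀ n ∈ s, ∀ m ∈ s, ((n : ZMod q) = m ↔ n = m) := fun n hn m hm ↦ by
    rw [ZMod.natCast_eq_natCast_iff', Nat.mod_eq_of_lt (hs n hn), Nat.mod_eq_of_lt (hs m hm)]
  have parseval : ((∑ ψ : DirichletCharacter ℂ q, ‖∑ n ∈ s, c n * ψ n‖ ^ 2 : ℝ) : ℂ) =
      ((q.totient * ∑ n ∈ s, if IsUnit (n : ZMod q) then ‖c n‖ ^ 2 else 0 : ℝ) : ℂ) := by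
    push_cast
    simp_rw [← Complex.mul_conj', map_sum, sum_mul_sum, map_mul]
    calc ∑ ψ : DirichletCharacter ℂ q, ∑ n ∈ s, ∑ m ∈ s,
          c n * ψ n * (starRingEnd ℂ (c m) * starRingEnd ℂ (ψ m))
        = ∑ n ∈ s, ∑ m ∈ s, c n * starRingEnd ℂ (c m) *
            ∑ ψ : DirichletCharacter ℂ q, ψ n * starRingEnd ℂ (ψ m) := by
          rw [sum_comm]
          refine sum_congr rfl fun n _ ↦ ?_
          rw [sum_comm]
          refine sum_congr rfl fun m _ ↦ ?_
          rw [mul_sum]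
          exact sum_congr rfl fun ψ _ ↦ by ring
      _ = ∑ n ∈ s, (q.totient : ℂ) *
            if IsUnit (n : ZMod q) then c n * starRingEnd ℂ (c n) else 0 := by
          refine sum_congr rfl fun n hn ↦ ?_
          simp_rw [sum_apply_mul_conj_apply]
          rw [sum_eq_single_of_mem n hn fun m hm hmn ↦ by simp [hinj n hn m hm, hmn.symm]]
          split_ifs <;> simp_all [mul_comm]
      _ = _ := by
          rw [mul_sum]
          refine sum_congr rfl fun n _ ↦ ?_
          split_ifs <;> simp [Complex.mul_conj']
  rw [Complex.ofReal_inj.1 parseval]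
  gcongr with n
  split_ifs
  exacts [le_rfl, by positivity]

end DirichletCharacter

/-- `X1` and `X2` are the cases `a = ν₂₀`, `a = υ₂₀` at `s = s₀`. -/
def twistedSum (a : ℕ → ℂ) (s : ℂ) {q : ℕ} (ψ : DirichletCharacter ℂ q) (x : ℝ) : ℂ :=
  ∑ n ∈ Icc 1 ⌊x⌋₊, a n * ψ n * (n : ℂ) ^ (-s)

section twistedSum

variable (a : ℕ → ℂ) {q : ℕ}

theorem measurable_twistedSum (s : ℂ) (ψ : DirichletCharacter ℂ q) :
    Measurable (twistedSum a s ψ) :=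
  (measurable_from_nat (f := fun N ↦ ∑ n ∈ Icc 1 N, a n * ψ n * (n : ℂ) ^ (-s))).comp
    Nat.measurable_floor

theorem sum_norm_twistedSum_sq_le [NeZero q] {s : ℂ} (hs : s.re = 1 / 2) {x : ℝ}
    (hx : ⌊x⌋₊ < q) :
    ∑ ψ : DirichletCharacter ℂ q, ‖twistedSum a s ψ x‖ ^ 2 ≤
      q * ∑ n ∈ Icc 1 ⌊x⌋₊, ‖a n‖ ^ 2 / n := by
  have hnorm : ∀ n ∈ Icc 1 ⌊x⌋₊, ‖a n * (n : ℂ) ^ (-s)‖ ^ 2 = ‖a n‖ ^ 2 / n := fun n hn ↦ by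
    have hsq : ((n : ℝ) ^ (-(1 / 2 : ℝ))) ^ 2 = (n : ℝ)⁻¹ := by
      rw [← Real.rpow_natCast, ← Real.rpow_mul n.cast_nonneg]
      norm_num [Real.rpow_neg_one]
    rw [norm_mul, Complex.norm_natCast_cpow_of_pos (mem_Icc.1 hn).1, mul_pow, Complex.neg_re, hs,
      hsq, div_eq_mul_inv]
  calc ∑ ψ : DirichletCharacter ℂ q, ‖twistedSum a s ψ x‖ ^ 2
      = ∑ ψ : DirichletCharacter ℂ q, ‖∑ n ∈ Icc 1 ⌊x⌋₊, a n * (n : ℂ) ^ (-s) * ψ n‖ ^ 2 := by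
        simp only [twistedSum, mul_right_comm]
    _ ≤ q.totient * ∑ n ∈ Icc 1 ⌊x⌋₊, ‖a n * (n : ℂ) ^ (-s)‖ ^ 2 :=
        DirichletCharacter.sum_norm_sum_mul_apply_sq_le
          (fun n hn ↦ (mem_Icc.1 hn).2.trans_lt hx) _
    _ ≤ q * ∑ n ∈ Icc 1 ⌊x⌋₊, ‖a n‖ ^ 2 / n := by
        rw [sum_congr rfl hnorm]
        gcongr
        exact_mod_cast Nat.totient_le q

end twistedSum

/-- Chebyshev's inequality, after Cauchy–Schwarz bounds the sum over the exceptional set by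
`√#B * √V` pointwise. -/
theorem card_le_of_sum_sq_le {ι : Type*} [Fintype ι] {f : ι → ℝ → ℝ} (hf : ∀ i, Measurable (f i))
    {X V T : ℝ} (hX : 1 ≤ X) (hT : 0 < T) (hV : ∀ x ∈ Set.Icc 1 X, ∑ i, f i x ^ 2 ≤ V) :
    (#{i | T ≤ f i X + ∫ x in (1 : ℝ)..X, f i x / x} : ℝ) ≤ (1 + Real.log X) ^ 2 * V / T ^ 2 := by
  set B := ({i | T ≤ f i X + ∫ x in (1 : ℝ)..X, f i x / x} : Finset ι)
  have hV0 : 0 ≤ V := (sum_nonneg fun i _ ↦ sq_nonneg _).trans (hV 1 ⟨le_rfl, hX⟩)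
  have hX0 : (0 : ℝ) ∉ Set.uIcc 1 X := by rw [Set.uIcc_of_le hX]; exact fun h ↦ by linarith [h.1]
  have hbound (i : ι) (x : ℝ) (hx : x ∈ Set.Icc 1 X) : |f i x| ≤ √V :=
    Real.abs_le_sqrt <| (single_le_sum (fun j _ ↦ sq_nonneg (f j x)) (mem_univ i)).trans (hV x hx)
  have hint (i : ι) : IntervalIntegrable (fun x ↦ f i x / x) MeasureTheory.volume 1 X := by
    rw [intervalIntegrable_iff_integrableOn_Ioc_of_le hX]
    refine MeasureTheory.Measure.integrableOn_of_bounded (M := √V) (by simp)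
      ((hf i).div measurable_id).aestronglyMeasurable ?_
    filter_upwards [MeasureTheory.ae_restrict_mem measurableSet_Ioc] with x hx
    rw [Real.norm_eq_abs, abs_div, abs_of_pos (a := x) (by linarith [hx.1])]
    exact (div_le_self (abs_nonneg _) hx.1.le).trans (hbound i x ⟨hx.1.le, hx.2⟩)
  have hCS (x : ℝ) (hx : x ∈ Set.Icc 1 X) : ∑ i ∈ B, f i x ≤ √(#B : ℝ) * √V := by
    calc ∑ i ∈ B, f i x = ∑ i ∈ B, 1 * f i x := by simp
      _ ≤ √(∑ i ∈ B, 1 ^ 2) * √(∑ i ∈ B, f i x ^ 2) := Real.sum_mul_le_sqrt_mul_sqrt _ _ _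
      _ ≤ √(#B : ℝ) * √V := by
          gcongr
          · simp
          · exact (sum_le_sum_of_subset_of_nonneg (subset_univ B)
              fun _ _ _ ↦ sq_nonneg _).trans (hV x hx)
  have hlog : ∑ i ∈ B, ∫ x in (1 : ℝ)..X, f i x / x ≤ √(#B : ℝ) * √V * Real.log X := by
    rw [← intervalIntegral.integral_finsetSum fun i _ ↦ hint i]
    calc ∫ x in (1 : ℝ)..X, ∑ i ∈ B, f i x / x
        ≤ ∫ x in (1 : ℝ)..X, √(#B : ℝ) * √V * x⁻¹ := by
          refine intervalIntegral.integral_mono_on hX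
            (by simpa only [sum_fn] using IntervalIntegrable.sum B fun i _ ↦ hint i)
            (continuousOn_const.mul (continuousOn_inv₀.mono fun x hx ↦
              ne_of_mem_of_not_mem hx hX0)).intervalIntegrable fun x hx ↦ ?_
          rw [← sum_div, div_eq_mul_inv]
          exact mul_le_mul_of_nonneg_right (hCS x hx) (inv_nonneg.2 (by linarith [hx.1]))
      _ = √(#B : ℝ) * √V * Real.log X := by
          rw [intervalIntegral.integral_const_mul, integral_inv hX0, div_one]
  have hcheb : #B * T ≤ √(#B : ℝ) * (√V * (1 + Real.log X)) := by
    calc #B * T ≤ ∑ i ∈ B, (f i X + ∫ x in (1 : ℝ)..X, f i x / x) := by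
          rw [← nsmul_eq_mul]; exact card_nsmul_le_sum _ _ _ fun i hi ↦ (mem_filter.1 hi).2
      _ ≤ √(#B : ℝ) * √V + √(#B : ℝ) * √V * Real.log X := by
          rw [sum_add_distrib]; exact add_le_add (hCS X ⟨hX, le_rfl⟩) hlog
      _ = √(#B : ℝ) * (√V * (1 + Real.log X)) := by ring
  rw [le_div_iff₀ (by positivity)]
  obtain hB | hB := (Nat.cast_nonneg (α := ℝ) #B).eq_or_lt
  · rw [← hB, zero_mul]; exact mul_nonneg (sq_nonneg _) hV0
  have hsqrt : √(#B : ℝ) * T ≤ √V * (1 + Real.log X) := by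
    refine le_of_mul_le_mul_left ?_ (Real.sqrt_pos.2 hB)
    rwa [← mul_assoc, Real.mul_self_sqrt hB.le]
  calc (#B : ℝ) * T ^ 2 = (√(#B : ℝ) * T) ^ 2 := by rw [mul_pow, Real.sq_sqrt hB.le]
    _ ≤ (√V * (1 + Real.log X)) ^ 2 := pow_le_pow_left₀ (by positivity) hsqrt 2
    _ = (1 + Real.log X) ^ 2 * V := by rw [mul_pow, Real.sq_sqrt hV0, mul_comm]

theorem s0_re (D : ℕ) : (s0 D).re = 1 / 2 := by simp [s0]

theorem sum_norm_X1_add_norm_X2_sq_le {D : ℕ} (χ : DirichletCharacter ℂ D) {p : ℕ} [NeZero p]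
    {x : ℝ} (hx : 1 ≤ x) (hxp : x < p) :
    ∑ ψ : DirichletCharacter ℂ p, (‖X1 D χ ψ x‖ + ‖X2 D χ ψ x‖) ^ 2 ≤
      4 * p * (1 + Real.log x) ^ 1600 := by
  have hfloor : ⌊x⌋₊ < p := Nat.floor_lt' (NeZero.ne p) |>.2 hxp
  have hlog : (1 + Real.log ⌊x⌋₊) ^ (40 * 40) ≤ (1 + Real.log x) ^ 1600 := by
    have hfloor_one : (1 : ℝ) ≤ ⌊x⌋₊ := by exact_mod_cast Nat.floor_pos.2 hx
    have := Real.log_nonneg hfloor_one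
    gcongr
    exact Nat.floor_le (by linarith)
  have mean_sq (a : ℕ → ℂ) (ha : ∀ n, ‖a n‖ ≤ (ζ ^ 40) n) :
      ∑ ψ : DirichletCharacter ℂ p, ‖twistedSum a (s0 D) ψ x‖ ^ 2 ≤
        p * (1 + Real.log x) ^ 1600 :=
    (sum_norm_twistedSum_sq_le a (s0_re D) hfloor).trans <| by
      gcongr; exact (sum_Icc_norm_sq_div_le ha _).trans hlog
  have h1 : ∑ ψ : DirichletCharacter ℂ p, ‖X1 D χ ψ x‖ ^ 2 ≤ p * (1 + Real.log x) ^ 1600 :=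
    mean_sq (nu20 D χ) (norm_nu20_le D χ)
  have h2 : ∑ ψ : DirichletCharacter ℂ p, ‖X2 D χ ψ x‖ ^ 2 ≤ p * (1 + Real.log x) ^ 1600 :=
    mean_sq (ups20 D χ) (norm_ups20_le D χ)
  calc ∑ ψ : DirichletCharacter ℂ p, (‖X1 D χ ψ x‖ + ‖X2 D χ ψ x‖) ^ 2
      ≤ ∑ ψ : DirichletCharacter ℂ p, 2 * (‖X1 D χ ψ x‖ ^ 2 + ‖X2 D χ ψ x‖ ^ 2) :=
        sum_le_sum fun ψ _ ↦ add_sq_le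
    _ = 2 * (∑ ψ : DirichletCharacter ℂ p, ‖X1 D χ ψ x‖ ^ 2 +
          ∑ ψ : DirichletCharacter ℂ p, ‖X2 D χ ψ x‖ ^ 2) := by
        rw [← sum_add_distrib, mul_sum]
    _ ≤ 4 * p * (1 + Real.log x) ^ 1600 := by
        generalize (1 + Real.log x) ^ 1600 = A at h1 h2 ⊢
        calc 2 * (∑ ψ : DirichletCharacter ℂ p, ‖X1 D χ ψ x‖ ^ 2 +
              ∑ ψ : DirichletCharacter ℂ p, ‖X2 D χ ψ x‖ ^ 2) ≤ 2 * (p * A + p * A) := by gcongr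
          _ = 4 * p * A := by ring

theorem one_lt_of_bigL_pos {D : ℕ} (h : 0 < bigL D) : 1 < (D : ℝ) :=
  (Real.log_pos_iff D.cast_nonneg).1 h

theorem card_not_ineq1_le {D : ℕ} (χ : DirichletCharacter ℂ D) (hL : 1 ≤ bigL D) {p : ℕ}
    (hp : (D : ℝ) ^ 80 < p) :
    (#{ψ : DirichletCharacter ℂ p | ¬Ineq1 D χ ψ} : ℝ) ≤
      4 * 81 ^ 1602 * p * bigL D ^ (-740 : ℤ) := by
  have hD : 1 ≤ (D : ℝ) ^ 80 := one_le_pow₀ (one_lt_of_bigL_pos (by linarith)).le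
  have hlog : 1 + Real.log ((D : ℝ) ^ 80) ≤ 81 * bigL D := by
    rw [Real.log_pow, ← bigL]; push_cast; linarith
  have : NeZero p := ⟨by rintro rfl; simp at hp; linarith⟩
  have hV (x : ℝ) (hx : x ∈ Set.Icc 1 ((D : ℝ) ^ 80)) :
      ∑ ψ : DirichletCharacter ℂ p, (‖X1 D χ ψ x‖ + ‖X2 D χ ψ x‖) ^ 2 ≤
        4 * p * (81 * bigL D) ^ 1600 := by
    refine (sum_norm_X1_add_norm_X2_sq_le χ hx.1 (hx.2.trans_lt hp)).trans ?_
    have : 0 ≤ Real.log x := Real.log_nonneg hx.1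
    gcongr
    exact (add_le_add_right (Real.log_le_log (by linarith [hx.1]) hx.2) 1).trans hlog
  have hcount := card_le_of_sum_sq_le (f := fun ψ x ↦ ‖X1 D χ ψ x‖ + ‖X2 D χ ψ x‖)
    (fun ψ ↦ (measurable_twistedSum _ _ ψ).norm.add (measurable_twistedSum _ _ ψ).norm) hD
    (by positivity : (0 : ℝ) < bigL D ^ 1171) hV
  simp only [Ineq1, not_lt]
  refine hcount.trans ?_
  have hlog0 : 0 ≤ 1 + Real.log ((D : ℝ) ^ 80) := by linarith [Real.log_nonneg hD]
  calc (1 + Real.log ((D : ℝ) ^ 80)) ^ 2 * (4 * p * (81 * bigL D) ^ 1600) / (bigL D ^ 1171) ^ 2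
      ≤ (81 * bigL D) ^ 2 * (4 * p * (81 * bigL D) ^ 1600) / (bigL D ^ 1171) ^ 2 := by gcongr
    _ = 4 * 81 ^ 1602 * p * bigL D ^ (-740 : ℤ) := by
        have hL0 : bigL D ≠ 0 := by positivity
        generalize (81 : ℝ) = c
        rw [zpow_neg, zpow_ofNat]
        field_simp

theorem two_le_bigL {D : ℕ} (hD : 9 ≤ D) : 2 ≤ bigL D := by
  rw [bigL, Real.le_log_iff_exp_le (by positivity)]
  calc Real.exp 2 = Real.exp 1 ^ 2 := by rw [← Real.exp_nat_mul]; norm_num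
    _ ≤ 3 ^ 2 := by gcongr; exact Real.exp_one_lt_three.le
    _ ≤ D := by norm_num; exact_mod_cast hD

theorem pow_eighty_lt_bigP {D : ℕ} (hL : 2 ≤ bigL D) : (D : ℝ) ^ 80 < bigP D := by
  have hD : (0 : ℝ) < D := zero_lt_one.trans (one_lt_of_bigL_pos (by linarith))
  rw [bigP, ← Real.exp_log (pow_pos hD 80), Real.log_pow, ← bigL, Real.exp_lt_exp]
  have h8 : (2 : ℝ) ^ 8 ≤ bigL D ^ 8 := pow_le_pow_left₀ (by norm_num) hL 8
  calc ((80 : ℕ) : ℝ) * bigL D < 2 ^ 8 * bigL D := by push_cast; linarith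
    _ ≤ bigL D ^ 8 * bigL D := by gcongr
    _ = bigL D ^ 9 := by ring

/-- The number of `ψ ∈ Ψ` for which (3.4) fails is `≤ C 𝒫 𝓛^{-740}`. -/
theorem statement4 :
    ∃ C : ℝ, 0 < C ∧ ∃ D₀ : ℕ, ∀ D : ℕ, D₀ ≤ D → ∀ χ : DirichletCharacter ℂ D,
      IsRealChar χ → χ.IsPrimitive →
        (∑ p ∈ primesP D,
            (Nat.card {ψ : DirichletCharacter ℂ p // ψ.IsPrimitive ∧ ¬Ineq1 D χ ψ} : ℝ)) ≤
          C * calP D * bigL D ^ (-740 : ℤ) := by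
  refine ⟨4 * 81 ^ 1602, by positivity, 9, fun D hD χ _ _ ↦ ?_⟩
  have hL := two_le_bigL hD
  rw [calP, mul_sum, sum_mul]
  refine sum_le_sum fun p hp ↦ ?_
  have hP : (D : ℝ) ^ 80 < p := (pow_eighty_lt_bigP hL).trans (mem_filter.1 hp).2.2.1
  refine le_trans ?_ (card_not_ineq1_le χ (by linarith) hP)
  rw [Nat.card_eq_fintype_card, Fintype.card_subtype]
  gcongr
  exact And.right

end
end

section
/- There is a positive absolute constant C such that the following holds. For every ψ ∈ Ψ₁ and every s ∈ Ω₁, one has |F(s,ψ)| + |G(s,ψ)| ≤ C·𝓛^{79}. -/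
open scoped Classical

noncomputable section

/-!
Twisting by `ψ` turns the Dirichlet convolution into a product of `L`-series, so
`F(s, ψ)²⁰ = ∑_{n ≤ D⁸⁰} ν₂₀(n) ψ(n) n^{-s}`. Writing `n^{-s} = n^{-s₀} n^{s₀ - s}` and applying
Abel summation expresses this through the partial sums `X₁(x, ψ)`, which (3.4) controls, at the
cost of a factor `x^{Re (s₀ - s)} ≤ 𝓛` (as `Re (s₀ - s) ≤ log 𝓛 / (100 𝓛)` and `x ≤ D⁸⁰`) and
of `1 + |s₀ - s| ≪ 𝓛^{405}`. Hence `|F(s, ψ)|²⁰ ≪ 𝓛^{1 + 405 + 1171} ≤ 𝓛^{1580}`, and likewise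
for `G` with `υ` and `X₂`.
-/

open Finset MeasureTheory

open scoped LSeries.notation

namespace ArithmeticFunction

variable {R : Type*} [Semiring R] {f g : ArithmeticFunction R} {M M' : ℕ}

theorem mul_apply_eq_zero_of_mul_lt (hf : ∀ n, M < n → f n = 0) (hg : ∀ n, M' < n → g n = 0)
    {n : ℕ} (hn : M * M' < n) : (f * g) n = 0 := by
  rw [mul_apply]
  refine sum_eq_zero fun x hx => ?_
  obtain ⟨rfl, -⟩ := Nat.mem_divisorsAntidiagonal.mp hx
  rcases lt_or_ge M x.1 with h | h
  · rw [hf _ h, zero_mul]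
  · rw [hg _ (lt_of_not_ge fun h' => hn.not_ge (Nat.mul_le_mul h h')), mul_zero]

theorem pow_apply_eq_zero_of_pow_lt (hf : ∀ n, M < n → f n = 0) (k : ℕ) {n : ℕ}
    (hn : M ^ k < n) : (f ^ k) n = 0 := by
  induction k generalizing n with
  | zero =>
    rw [pow_zero] at hn ⊢
    exact one_apply_ne hn.ne'
  | succ k ih => exact mul_apply_eq_zero_of_mul_lt (fun _ => ih) hf (by rwa [← pow_succ])

end ArithmeticFunction

theorem LSeriesHasSum_sum_Icc_of_eq_zero {g : ℕ → ℂ} {N : ℕ} (hg : ∀ n, N < n → g n = 0) (s : ℂ) :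
    LSeriesHasSum g s (∑ n ∈ Icc 1 N, g n * (n : ℂ) ^ (-s)) := by
  have hzero : ∀ n ∉ Icc 1 N, LSeries.term g s n = 0 := by
    intro n hn
    rcases Nat.eq_zero_or_pos n with rfl | hpos
    · exact LSeries.term_zero g s
    · have hNn : N < n := lt_of_not_ge fun h => hn (mem_Icc.mpr ⟨hpos, h⟩)
      rw [LSeries.term_of_ne_zero hpos.ne', hg n hNn, zero_div]
  have hterm : ∑ n ∈ Icc 1 N, LSeries.term g s n = ∑ n ∈ Icc 1 N, g n * (n : ℂ) ^ (-s) := by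
    refine sum_congr rfl fun n hn => ?_
    rw [LSeries.term_of_ne_zero (by linarith [(mem_Icc.mp hn).1]), Complex.cpow_neg,
      div_eq_mul_inv]
  exact hterm ▸ hasSum_sum_of_ne_finset_zero hzero

def dirichletPoly (f : ArithmeticFunction ℂ) {q : ℕ} (ψ : DirichletCharacter ℂ q)
    (s : ℂ) (N : ℕ) : ℂ :=
  ∑ n ∈ Icc 1 N, f n * ψ n * (n : ℂ) ^ (-s)

section DirichletPoly

variable {f : ArithmeticFunction ℂ} {q : ℕ} (ψ : DirichletCharacter ℂ q) (s : ℂ) {M N : ℕ}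

theorem LSeriesHasSum_twist_dirichletPoly (hf : ∀ n, N < n → f n = 0) :
    LSeriesHasSum (↗ψ * ⇑f) s (dirichletPoly f ψ s N) := by
  have := LSeriesHasSum_sum_Icc_of_eq_zero (g := ↗ψ * ⇑f) (N := N) (fun n hn => by simp [hf n hn]) s
  simpa only [dirichletPoly, Pi.mul_apply, mul_comm (ψ _)] using this

theorem dirichletPoly_pow (hf : ∀ n, M < n → f n = 0) (k : ℕ) (hN : M ^ k ≤ N) :
    dirichletPoly f ψ s M ^ k = dirichletPoly (f ^ k) ψ s N := by
  induction k generalizing N with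
  | zero =>
    rw [pow_zero] at hN
    simpa [dirichletPoly, ArithmeticFunction.one_apply] using Nat.one_le_iff_ne_zero.mp hN
  | succ k ih =>
    have hfk := LSeriesHasSum_twist_dirichletPoly ψ s
      (fun n => ArithmeticFunction.pow_apply_eq_zero_of_pow_lt hf k (n := n))
    have hf1 := LSeriesHasSum_twist_dirichletPoly ψ s hf
    have hfk1 := LSeriesHasSum_twist_dirichletPoly ψ s (fun n hn =>
      ArithmeticFunction.pow_apply_eq_zero_of_pow_lt hf (k + 1) (hN.trans_lt hn))
    rw [pow_succ, ih le_rfl, ← hfk.LSeries_eq, ← hf1.LSeries_eq,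
      ← LSeries_convolution' hfk.LSeriesSummable hf1.LSeriesSummable,
      DirichletCharacter.mul_convolution_distrib, ArithmeticFunction.coe_mul, ← pow_succ,
      hfk1.LSeries_eq]

end DirichletPoly

theorem sum_Icc_zero_eq_sum_Icc_one {M : Type*} [AddCommMonoid M] {g : ℕ → M} (hg : g 0 = 0)
    (n : ℕ) : ∑ k ∈ Icc 0 n, g k = ∑ k ∈ Icc 1 n, g k := by
  rw [Icc_eq_cons_Ioc (Nat.zero_le n), sum_cons, hg, zero_add, ← Icc_add_one_left_eq_Ioc, zero_add]

theorem integrableOn_norm_sum_Icc_floor_div (c : ℕ → ℂ) (b : ℝ) :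
    IntegrableOn (fun t : ℝ => ‖∑ n ∈ Icc 1 ⌊t⌋₊, c n‖ / t) (Set.Icc 1 b) := by
  have hinv : IntegrableOn (fun t : ℝ => ((t⁻¹ : ℝ) : ℂ)) (Set.Icc 1 b) :=
    (continuousOn_of_forall_continuousAt fun t ht =>
      (continuousAt_inv₀ (by linarith [ht.1])).ofReal).integrableOn_Icc
  refine IntegrableOn.congr_fun (integrableOn_mul_sum_Icc c (m := 1) zero_le_one hinv).norm
    (fun t ht => ?_) measurableSet_Icc
  have : 0 < t := by linarith [ht.1]
  simp [abs_of_pos this, div_eq_inv_mul]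

theorem integral_norm_div_nonneg {b : ℝ} (hb : 1 ≤ b) (X : ℝ → ℂ) :
    0 ≤ ∫ t in (1 : ℝ)..b, ‖X t‖ / t :=
  intervalIntegral.integral_nonneg hb fun t ht => div_nonneg (norm_nonneg _) (by linarith [ht.1])

theorem hasDerivAt_ofReal_cpow {t : ℝ} (ht : 0 < t) (w : ℂ) :
    HasDerivAt (fun x : ℝ => (x : ℂ) ^ w) (w * (t : ℂ) ^ (w - 1)) t :=
  (Complex.hasStrictDerivAt_cpow_const (Complex.ofReal_mem_slitPlane.2 ht)).hasDerivAt.comp_ofReal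

theorem integrableOn_deriv_ofReal_cpow (w : ℂ) {a b : ℝ} (ha : 0 < a) :
    IntegrableOn (deriv fun x : ℝ => (x : ℂ) ^ w) (Set.Icc a b) := by
  refine ContinuousOn.integrableOn_Icc (ContinuousOn.congr (f := fun t : ℝ => w * (t : ℂ) ^ (w - 1))
    ?_ fun t ht => (hasDerivAt_ofReal_cpow (by linarith [ht.1]) w).deriv)
  exact continuousOn_of_forall_continuousAt fun t ht => continuousAt_const.mul
    (Complex.continuousAt_ofReal_cpow_const t _ (Or.inr (by linarith [ht.1])))

theorem norm_integral_deriv_cpow_mul_sum_le (c : ℕ → ℂ) (w : ℂ) {b B : ℝ}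
    (hB : ∀ t ∈ Set.Icc 1 b, t ^ w.re ≤ B) :
    ‖∫ t in Set.Ioc 1 b, deriv (fun x : ℝ => (x : ℂ) ^ w) t * ∑ n ∈ Icc 1 ⌊t⌋₊, c n‖ ≤
      ‖w‖ * B * ∫ t in Set.Ioc 1 b, ‖∑ n ∈ Icc 1 ⌊t⌋₊, c n‖ / t := by
  rw [← integral_const_mul]
  refine norm_integral_le_of_norm_le
    (((integrableOn_norm_sum_Icc_floor_div c b).mono_set Set.Ioc_subset_Icc_self).const_mul _)
    (ae_restrict_of_forall_mem measurableSet_Ioc fun t ht => ?_)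
  have ht0 : 0 < t := by linarith [ht.1]
  rw [norm_mul, (hasDerivAt_ofReal_cpow ht0 w).deriv, norm_mul,
    Complex.norm_cpow_eq_rpow_re_of_pos ht0, Complex.sub_re, Complex.one_re,
    Real.rpow_sub_one ht0.ne']
  have hBt := hB t (Set.Ioc_subset_Icc_self ht)
  calc ‖w‖ * (t ^ w.re / t) * ‖∑ n ∈ Icc 1 ⌊t⌋₊, c n‖
      = ‖w‖ * t ^ w.re * (‖∑ n ∈ Icc 1 ⌊t⌋₊, c n‖ / t) := by ring
    _ ≤ ‖w‖ * B * (‖∑ n ∈ Icc 1 ⌊t⌋₊, c n‖ / t) := by gcongr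

theorem norm_sum_mul_cpow_le {c : ℕ → ℂ} (hc : c 0 = 0) (w : ℂ) {b B : ℝ} (hb : 1 ≤ b)
    (hB : ∀ t ∈ Set.Icc 1 b, t ^ w.re ≤ B) :
    ‖∑ n ∈ Icc 1 ⌊b⌋₊, c n * (n : ℂ) ^ w‖ ≤
      B * (‖∑ n ∈ Icc 1 ⌊b⌋₊, c n‖ + ‖w‖ * ∫ t in (1 : ℝ)..b, ‖∑ n ∈ Icc 1 ⌊t⌋₊, c n‖ / t) := by
  have habel := sum_mul_eq_sub_integral_mul₀ c hc b
    (fun t ht => (hasDerivAt_ofReal_cpow (by linarith [ht.1]) w).differentiableAt)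
    (integrableOn_deriv_ofReal_cpow w zero_lt_one)
  simp only [Complex.ofReal_natCast] at habel
  rw [sum_Icc_zero_eq_sum_Icc_one (g := fun k : ℕ => (k : ℂ) ^ w * c k) (by simp [hc])] at habel
  simp only [sum_Icc_zero_eq_sum_Icc_one hc] at habel
  have hbw : ‖(b : ℂ) ^ w‖ ≤ B := by
    rw [Complex.norm_cpow_eq_rpow_re_of_pos (by linarith)]
    exact hB b ⟨hb, le_rfl⟩
  calc ‖∑ n ∈ Icc 1 ⌊b⌋₊, c n * (n : ℂ) ^ w‖
      = ‖(b : ℂ) ^ w * ∑ k ∈ Icc 1 ⌊b⌋₊, c k -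
          ∫ t in Set.Ioc 1 b, deriv (fun x : ℝ => (x : ℂ) ^ w) t * ∑ n ∈ Icc 1 ⌊t⌋₊, c n‖ := by
        rw [← habel]
        simp only [mul_comm]
    _ ≤ B * ‖∑ n ∈ Icc 1 ⌊b⌋₊, c n‖ +
          ‖w‖ * B * ∫ t in Set.Ioc 1 b, ‖∑ n ∈ Icc 1 ⌊t⌋₊, c n‖ / t := by
        refine (norm_sub_le _ _).trans
          (add_le_add ?_ (norm_integral_deriv_cpow_mul_sum_le c w hB))
        rw [norm_mul]
        gcongr
    _ = _ := by rw [intervalIntegral.integral_of_le hb]; ring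

theorem norm_dirichletPoly_pow_le {f : ArithmeticFunction ℂ} {q : ℕ} (ψ : DirichletCharacter ℂ q)
    (s s₀ : ℂ) {M k : ℕ} (hf : ∀ n, M < n → f n = 0) {b B : ℝ} (hb : 1 ≤ b)
    (hM : M ^ k ≤ ⌊b⌋₊) (hB : ∀ t ∈ Set.Icc 1 b, t ^ (s₀ - s).re ≤ B) :
    ‖dirichletPoly f ψ s M‖ ^ k ≤ B * (1 + ‖s₀ - s‖) *
      (‖dirichletPoly (f ^ k) ψ s₀ ⌊b⌋₊‖ +
        ∫ t in (1 : ℝ)..b, ‖dirichletPoly (f ^ k) ψ s₀ ⌊t⌋₊‖ / t) := by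
  have hshift : dirichletPoly (f ^ k) ψ s ⌊b⌋₊ =
      ∑ n ∈ Icc 1 ⌊b⌋₊, (f ^ k) n * ψ n * (n : ℂ) ^ (-s₀) * (n : ℂ) ^ (s₀ - s) := by
    refine sum_congr rfl fun n hn => ?_
    have hn0 : (n : ℂ) ≠ 0 := Nat.cast_ne_zero.mpr (by linarith [(mem_Icc.mp hn).1])
    rw [mul_assoc _ ((n : ℂ) ^ (-s₀)), ← Complex.cpow_add _ _ hn0, show -s₀ + (s₀ - s) = -s by ring]
  have hB1 : 1 ≤ B := by simpa using hB 1 ⟨le_rfl, hb⟩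
  rw [← norm_pow, dirichletPoly_pow ψ s hf k hM, hshift]
  refine (norm_sum_mul_cpow_le (by simp) (s₀ - s) hb hB).trans ?_
  rw [mul_assoc B]
  gcongr
  change ‖dirichletPoly (f ^ k) ψ s₀ ⌊b⌋₊‖ +
    ‖s₀ - s‖ * ∫ t in (1 : ℝ)..b, ‖dirichletPoly (f ^ k) ψ s₀ ⌊t⌋₊‖ / t ≤ _
  nlinarith [norm_nonneg (dirichletPoly (f ^ k) ψ s₀ ⌊b⌋₊), norm_nonneg (s₀ - s),
    integral_norm_div_nonneg hb fun t => dirichletPoly (f ^ k) ψ s₀ ⌊t⌋₊]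

section Region

variable {D : ℕ} {s : ℂ}

theorem InOmega1.rpow_re_sub_le (hs : InOmega1 D s) (hL : 1 ≤ bigL D) {t : ℝ}
    (ht : t ∈ Set.Icc 1 ((D : ℝ) ^ 80)) : t ^ (s0 D - s).re ≤ bigL D := by
  have hre : (s0 D - s).re = 1 / 2 - s.re := by simp [s0]
  have ht0 : 0 < t := by linarith [ht.1]
  have hlogt0 : 0 ≤ Real.log t := Real.log_nonneg ht.1
  have hlogt : Real.log t ≤ 80 * bigL D := by
    calc Real.log t ≤ Real.log ((D : ℝ) ^ 80) := Real.log_le_log ht0 ht.2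
      _ = 80 * bigL D := by rw [Real.log_pow, bigL]; norm_num
  have hlogL : 0 ≤ Real.log (bigL D) := Real.log_nonneg hL
  have hexp : Real.log t * (s0 D - s).re ≤ Real.log (bigL D) := by
    rcases le_or_gt (s0 D - s).re 0 with hneg | hpos
    · nlinarith
    · calc Real.log t * (s0 D - s).re
          ≤ 80 * bigL D * (Real.log (bigL D) / (100 * bigL D)) :=
            mul_le_mul hlogt (by linarith [hs.1]) hpos.le (by positivity)
        _ ≤ Real.log (bigL D) := by
            rw [mul_div_assoc', div_le_iff₀ (by positivity)]
            nlinarith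
  calc t ^ (s0 D - s).re = Real.exp (Real.log t * (s0 D - s).re) := Real.rpow_def_of_pos ht0 _
    _ ≤ Real.exp (Real.log (bigL D)) := Real.exp_le_exp.mpr hexp
    _ = bigL D := Real.exp_log (by linarith)

theorem InOmega1.one_add_norm_sub_le (hs : InOmega1 D s) (hL : 2 ≤ bigL D) :
    1 + ‖s0 D - s‖ ≤ 8 * bigL D ^ 405 := by
  obtain ⟨hre₁, hre₂, him⟩ := hs
  have hδ : Real.log (bigL D) / (100 * bigL D) ≤ 1 / 2 := by
    rw [div_le_iff₀ (by positivity)]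
    nlinarith [Real.log_le_self (by linarith : 0 ≤ bigL D)]
  have hre : |(s0 D - s).re| ≤ 1 := by
    rw [show (s0 D - s).re = 1 / 2 - s.re by simp [s0], abs_le]
    constructor <;> linarith
  have him' : |(s0 D - s).im| ≤ bigL D ^ 405 + 5 := by
    rw [show (s0 D - s).im = 2 * Real.pi * t0 D - s.im by simp [s0], abs_sub_comm]
    exact him.le
  have hL405 : 1 ≤ bigL D ^ 405 := one_le_pow₀ (by linarith)
  linarith [Complex.norm_le_abs_re_add_abs_im (s0 D - s)]

end Region

theorem norm_dirichletPoly_le_of_moment_bound {D : ℕ} {f : ArithmeticFunction ℂ}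
    (hf : ∀ n, D ^ 4 < n → f n = 0) {p : ℕ} (ψ : DirichletCharacter ℂ p) {s : ℂ}
    (hs : InOmega1 D s) (hL : 2 ≤ bigL D)
    (hmoment : ‖dirichletPoly (f ^ 20) ψ (s0 D) ⌊(D : ℝ) ^ 80⌋₊‖ +
        ∫ t in (1 : ℝ)..(D : ℝ) ^ 80, ‖dirichletPoly (f ^ 20) ψ (s0 D) ⌊t⌋₊‖ / t ≤
      bigL D ^ 1171) :
    ‖dirichletPoly f ψ s (D ^ 4)‖ ≤ bigL D ^ 79 := by
  have hD : (1 : ℝ) ≤ D := by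
    rcases Nat.eq_zero_or_pos D with rfl | hD
    · norm_num [bigL] at hL
    · exact_mod_cast hD
  have hM : (D ^ 4) ^ 20 ≤ ⌊(D : ℝ) ^ 80⌋₊ := Nat.le_floor (le_of_eq (by push_cast; ring))
  have hpow := norm_dirichletPoly_pow_le ψ s (s0 D) hf (one_le_pow₀ hD) hM
    (fun t ht => hs.rpow_re_sub_le (by linarith) ht)
  refine (pow_le_pow_iff_left₀ (norm_nonneg _) (by positivity) (by norm_num : 20 ≠ 0)).mp ?_
  have hL3 : 8 ≤ bigL D ^ 3 := by
    calc (8 : ℝ) = 2 ^ 3 := by norm_num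
      _ ≤ bigL D ^ 3 := by gcongr
  calc ‖dirichletPoly f ψ s (D ^ 4)‖ ^ 20
      ≤ bigL D * (8 * bigL D ^ 405) * bigL D ^ 1171 := by
        refine hpow.trans (mul_le_mul ?_ hmoment ?_ ?_)
        · gcongr
          exact hs.one_add_norm_sub_le hL
        · exact add_nonneg (norm_nonneg _) (integral_norm_div_nonneg (one_le_pow₀ hD) _)
        · positivity
    _ = 8 * bigL D ^ 1577 := by ring
    _ ≤ bigL D ^ 3 * bigL D ^ 1577 := by gcongr
    _ = (bigL D ^ 79) ^ 20 := by ring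

section Psi1

variable {D : ℕ} (χ : DirichletCharacter ℂ D) {p : ℕ} (ψ : DirichletCharacter ℂ p)

theorem nuT_apply_of_lt {n : ℕ} (hn : D ^ 4 < n) : nuT D χ n = 0 := by
  simp [nuT, hn.not_ge]

theorem upsT_apply_of_lt {n : ℕ} (hn : D ^ 4 < n) : upsT D χ n = 0 := by
  simp [upsT, hn.not_ge]

theorem Ffun_eq_dirichletPoly (s : ℂ) : Ffun D χ ψ s = dirichletPoly (nuT D χ) ψ s (D ^ 4) := by
  refine sum_congr rfl fun n hn => ?_
  rw [mem_Icc] at hn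
  simp [nuT, hn.2, Nat.one_le_iff_ne_zero.mp hn.1]

theorem Gfun_eq_dirichletPoly (s : ℂ) : Gfun D χ ψ s = dirichletPoly (upsT D χ) ψ s (D ^ 4) := by
  refine sum_congr rfl fun n hn => ?_
  rw [mem_Icc] at hn
  simp [upsT, hn.2, Nat.one_le_iff_ne_zero.mp hn.1]

variable {χ ψ}

theorem Ineq1.moment_bounds (h : Ineq1 D χ ψ) (hD : 1 ≤ (D : ℝ) ^ 80) :
    (‖X1 D χ ψ ((D : ℝ) ^ 80)‖ + ∫ x in (1 : ℝ)..(D : ℝ) ^ 80, ‖X1 D χ ψ x‖ / x ≤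
      bigL D ^ 1171) ∧
    (‖X2 D χ ψ ((D : ℝ) ^ 80)‖ + ∫ x in (1 : ℝ)..(D : ℝ) ^ 80, ‖X2 D χ ψ x‖ / x ≤
      bigL D ^ 1171) := by
  have hint₁ : IntervalIntegrable (fun x => ‖X1 D χ ψ x‖ / x) volume 1 ((D : ℝ) ^ 80) :=
    (intervalIntegrable_iff_integrableOn_Icc_of_le hD).mpr
      (integrableOn_norm_sum_Icc_floor_div _ _)
  have hint₂ : IntervalIntegrable (fun x => ‖X2 D χ ψ x‖ / x) volume 1 ((D : ℝ) ^ 80) :=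
    (intervalIntegrable_iff_integrableOn_Icc_of_le hD).mpr
      (integrableOn_norm_sum_Icc_floor_div _ _)
  unfold Ineq1 at h
  simp only [add_div] at h
  rw [intervalIntegral.integral_add hint₁ hint₂] at h
  constructor <;> linarith [norm_nonneg (X1 D χ ψ ((D : ℝ) ^ 80)),
    norm_nonneg (X2 D χ ψ ((D : ℝ) ^ 80)), integral_norm_div_nonneg hD (X1 D χ ψ),
    integral_norm_div_nonneg hD (X2 D χ ψ)]

end Psi1

/-- For every `ψ ∈ Ψ₁` and every `s ∈ Ω₁`,
`|F(s,ψ)| + |G(s,ψ)| ≤ C 𝓛^{79}`. -/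
theorem statement7 :
    ∃ C : ℝ, 0 < C ∧ ∃ D₀ : ℕ, ∀ D : ℕ, D₀ ≤ D → ∀ χ : DirichletCharacter ℂ D,
      IsRealChar χ → χ.IsPrimitive →
        ∀ (p : ℕ) (ψ : DirichletCharacter ℂ p), MemPsi1 D χ ψ →
          ∀ s : ℂ, InOmega1 D s →
            ‖Ffun D χ ψ s‖ + ‖Gfun D χ ψ s‖ ≤ C * bigL D ^ 79 := by
  refine ⟨2, two_pos, ⌈Real.exp 2⌉₊, fun D hD χ _ _ p ψ hψ s hs => ?_⟩
  have hexp : Real.exp 2 ≤ D := Nat.ceil_le.mp hD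
  have hL : 2 ≤ bigL D := (Real.le_log_iff_exp_le (by linarith [Real.exp_pos 2])).mpr hexp
  have hD : (1 : ℝ) ≤ (D : ℝ) ^ 80 := one_le_pow₀ (by linarith [Real.add_one_le_exp 2])
  obtain ⟨-, -, hineq, -, -⟩ := hψ
  obtain ⟨hX1, hX2⟩ := hineq.moment_bounds hD
  have hF := norm_dirichletPoly_le_of_moment_bound (fun _ => nuT_apply_of_lt χ) ψ hs hL hX1
  have hG := norm_dirichletPoly_le_of_moment_bound (fun _ => upsT_apply_of_lt χ) ψ hs hL hX2
  rw [Ffun_eq_dirichletPoly, Gfun_eq_dirichletPoly]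
  linarith
end
end
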